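/- If X is a Kan complex, then for every q ≥ 1 the q-coskeleton cosk_q(X) is a Kan complex. -/

import Mathlib

open CategoryTheory CategoryTheory.Limits CategoryTheory.MonoidalCategory Simplicial Opposite

noncomputable section

namespace PaperSSet

/-! ### Topological preliminaries -/

/-- The induced map on path components of topological spaces. -/
def pi0Map {X Y : Type*} [TopologicalSpace X] [TopologicalSpace Y] (f : C(X, Y)) :
    ZerothHomotopy X → ZerothHomotopy Y :=
  Quotient.map f (fun _ _ h => Nonempty.map (fun p => p.map f.continuous) h)

/-- Postcomposition of a generalized loop with a continuous map. -/
def genLoopMap {N X Y : Type*} [TopologicalSpace X] [TopologicalSpace Y] {x : X}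
    (f : C(X, Y)) (p : GenLoop N X x) : GenLoop N Y (f x) :=
  ⟨f.comp p.1, fun y hy => by
    simp only [ContinuousMap.comp_apply]
    rw [p.2 y hy]⟩

/-- The induced map on homotopy groups of a continuous map. -/
def homotopyGroupMap {N X Y : Type*} [TopologicalSpace X] [TopologicalSpace Y] {x : X}
    (f : C(X, Y)) : HomotopyGroup N X x → HomotopyGroup N Y (f x) :=
  Quotient.map (genLoopMap f)
    (fun _ _ h => Nonempty.map (fun H => H.compContinuousMap f) h)

/-! ### π-finiteness and weak homotopy equivalences of simplicial sets -/

/-- A simplicial set `X` is π-finite if the set `π₀(|X|)` of path components of its geometric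
realization is finite, all homotopy groups `π_n(|X|, x)` (`n ≥ 1`) are finite, and there is an
`n₀` such that `π_n(|X|, x)` is trivial for all `n ≥ n₀` and all basepoints `x`. -/
def IsPiFinite (X : SSet.{0}) : Prop :=
  Finite (ZerothHomotopy (SSet.toTop.obj X)) ∧
  (∀ (n : ℕ), 1 ≤ n → ∀ x : SSet.toTop.obj X,
      Finite (HomotopyGroup (Fin n) (SSet.toTop.obj X) x)) ∧
  ∃ n₀ : ℕ, ∀ (n : ℕ), n₀ ≤ n → ∀ x : SSet.toTop.obj X,
      Subsingleton (HomotopyGroup (Fin n) (SSet.toTop.obj X) x)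

/-- A map of simplicial sets is a weak homotopy equivalence if its geometric realization
induces a bijection on path components and bijections (hence isomorphisms) on all homotopy
groups `π_n` (`n ≥ 1`) at all basepoints. -/
def IsWeakHomotopyEquiv {X Y : SSet.{0}} (f : X ⟶ Y) : Prop :=
  Function.Bijective (pi0Map (X := SSet.toTop.obj X) (Y := SSet.toTop.obj Y) (SSet.toTop.map f).hom) ∧
  ∀ (n : ℕ), 1 ≤ n → ∀ x : SSet.toTop.obj X,
    Function.Bijective
      (homotopyGroupMap (N := Fin n) (X := SSet.toTop.obj X) (Y := SSet.toTop.obj Y)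
        (x := x) (SSet.toTop.map f).hom)

/-! ### Kan fibrations and Kan complexes -/

/-- A map of simplicial sets is a Kan fibration if it has the right lifting property with
respect to all horn inclusions `Λ[n, i] ⟶ Δ[n]` for `n ≥ 1`, `0 ≤ i ≤ n`. -/
def IsKanFibration {E B : SSet.{0}} (p : E ⟶ B) : Prop :=
  ∀ (n : ℕ) (i : Fin (n + 2)), HasLiftingProperty ((SSet.horn (n + 1) i).ι) p

/-- A simplicial set is a Kan complex if the unique map to the terminal simplicial set is a
Kan fibration. -/
def IsKanComplex (X : SSet.{0}) : Prop :=
  IsKanFibration (SemiCartesianMonoidalCategory.toUnit X)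

/-! ### Fibers, coskeleta -/

/-- The map `Δ[0] ⟶ X` classifying a vertex of a simplicial set. -/
def vertexMap {X : SSet.{0}} (x : X _⦋0⦌) : Δ[0] ⟶ X :=
  (SSet.yonedaEquiv (X := X) (n := ⦋0⦌)).symm x

/-- The fiber of a map of simplicial sets over a vertex of the base, i.e. the pullback
along the classifying map of the vertex. -/
def fiber {E B : SSet.{0}} (p : E ⟶ B) (x : B _⦋0⦌) : SSet.{0} :=
  pullback p (vertexMap x)

/-- The `q`-coskeleton of a simplicial set: restrict to `Δ_{≤q}` and right Kan extend back. -/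
def coskObj (q : ℕ) (X : SSet.{0}) : SSet.{0} :=
  (SimplicialObject.cosk q).obj X

/-- The unit map `X ⟶ cosk_q X` of the coskeleton adjunction. -/
def coskUnit (q : ℕ) (X : SSet.{0}) : X ⟶ coskObj q X :=
  (SimplicialObject.coskAdj q).unit.app X

/-- A simplicial set is `q`-coskeletal if the unit map `X ⟶ cosk_q X` is an isomorphism. -/
def IsCoskeletal (q : ℕ) (X : SSet.{0}) : Prop :=
  IsIso (coskUnit q X)

/-! ### Internal homs and `Fill(D)` -/

instance : MonoidalClosed SSet.{0} :=
  inferInstanceAs (MonoidalClosed (SimplexCategoryᵒᵖ ⥤ Type 0))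

/-- The internal hom (exponential) `X ^ A` of simplicial sets. -/
def expObj (A X : SSet.{0}) : SSet.{0} := (ihom A).obj X

/-- The restriction map `X ^ Δ[n] ⟶ X ^ ∂Δ[n]` induced by the boundary inclusion. -/
def restrictionMap (X : SSet.{0}) (n : ℕ) : expObj Δ[n] X ⟶ expObj ∂Δ[n] X :=
  (MonoidalClosed.pre ((SSet.boundary n).ι)).app X

/-- The "name" `𝟙_ SSet ⟶ X ^ A` of a map `A ⟶ X` (the classifying map of the
corresponding vertex of the exponential). -/
def nameMap {A X : SSet.{0}} (f : A ⟶ X) : 𝟙_ SSet.{0} ⟶ expObj A X :=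
  MonoidalClosed.curry ((ρ_ A).hom ≫ f)

/-- `Fill(D)`: the fiber of the restriction map `X ^ Δ[n] ⟶ X ^ ∂Δ[n]` over the point
classifying `D : ∂Δ[n] ⟶ X`. -/
def fill {X : SSet.{0}} {n : ℕ} (D : (∂Δ[n] : SSet.{0}) ⟶ X) : SSet.{0} :=
  pullback (restrictionMap X n) (nameMap D)

lemma nameMap_comm {X : SSet.{0}} {n : ℕ} (x : Δ[n] ⟶ X) :
    nameMap x ≫ restrictionMap X n = nameMap ((SSet.boundary n).ι ≫ x) := by
  apply MonoidalClosed.uncurry_injective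
  erw [MonoidalClosed.uncurry_natural_left]

/-- The vertex of `Fill(D)` determined by a filler `x : Δ[n] ⟶ X` of `D`. -/
def fillVertex {X : SSet.{0}} {n : ℕ} {D : (∂Δ[n] : SSet.{0}) ⟶ X} (x : Δ[n] ⟶ X)
    (hx : (SSet.boundary n).ι ≫ x = D) : (fill D) _⦋0⦌ :=
  (pullback.lift (nameMap x) (𝟙 _) (by rw [Category.id_comp, nameMap_comm, hx])).app
    (op ⦋0⦌) ((SemiCartesianMonoidalCategory.toUnit Δ[0]).app (op ⦋0⦌) (SSet.yonedaEquiv (𝟙 Δ[0])))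

/-! ### Combinatorial path components -/

/-- Two vertices of a simplicial set are related by an edge. -/
def EdgeRel (X : SSet.{0}) (a b : X _⦋0⦌) : Prop :=
  ∃ e : X _⦋1⦌, X.map (SimplexCategory.δ 1).op e = a ∧ X.map (SimplexCategory.δ 0).op e = b

/-- The set of path components of a simplicial set: vertices modulo finite zigzags of edges. -/
def Pi0 (X : SSet.{0}) : Type :=
  Quot (EdgeRel X)

/-! ### Homotopy rel boundary and minimality -/

/-- The map `Δ[n] ⟶ Δ[1]` constant at vertex `i`. -/
def constEdgeVertex (n : ℕ) (i : Fin 2) : Δ[n] ⟶ Δ[1] :=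
  SSet.stdSimplex.map (SimplexCategory.const ⦋n⦌ ⦋1⦌ i)

/-- Two `n`-simplices `x y : Δ[n] ⟶ X` with common boundary are homotopic relative to their
boundary if there is a homotopy `H : Δ[n] × Δ[1] ⟶ X` from `x` to `y` whose restriction to
`∂Δ[n] × Δ[1]` is the constant homotopy at the common boundary. -/
def HomotopicRelBoundary {X : SSet.{0}} {n : ℕ} (x y : Δ[n] ⟶ X) : Prop :=
  ∃ H : Δ[n] ⊗ Δ[1] ⟶ X,
    CartesianMonoidalCategory.lift (𝟙 Δ[n]) (constEdgeVertex n 0) ≫ H = x ∧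
    CartesianMonoidalCategory.lift (𝟙 Δ[n]) (constEdgeVertex n 1) ≫ H = y ∧
    (SSet.boundary n).ι ▷ Δ[1] ≫ H =
      SemiCartesianMonoidalCategory.fst (∂Δ[n] : SSet.{0}) Δ[1] ≫ (SSet.boundary n).ι ≫ x

/-- A Kan complex is minimal if any two `n`-simplices which agree on their boundary and are
homotopic relative to their boundary are equal. -/
def IsMinimal (X : SSet.{0}) : Prop :=
  ∀ (n : ℕ) (x y : Δ[n] ⟶ X),
    (SSet.boundary n).ι ≫ x = (SSet.boundary n).ι ≫ y →
    HomotopicRelBoundary x y → x = y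


/-! ### Auxiliary development for Statement 7 -/

section CoskKanAux

open SSet SimplexCategory CategoryTheory.Limits

variable {n q : ℕ} {i : Fin (n + 2)}

/-- The morphism in the simplex category underlying a simplex of the horn. -/
def hornHom {m : SimplexCategoryᵒᵖ} (a : (Λ[n+1, i] : SSet.{0}).obj m) : m.unop ⟶ ⦋n+1⦌ :=
  SSet.stdSimplex.objEquiv a.1

lemma range_comp_epi {x y z : SimplexCategory} (e : x ⟶ y) (ι : y ⟶ z) [Epi e] :
    Set.range (e ≫ ι).toOrderHom = Set.range ι.toOrderHom := by
  have he : Function.Surjective e.toOrderHom :=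
    SimplexCategory.epi_iff_surjective.mp inferInstance
  rw [SimplexCategory.comp_toOrderHom]
  have : ⇑(ι.toOrderHom.comp e.toOrderHom) = ⇑ι.toOrderHom ∘ ⇑e.toOrderHom := rfl
  rw [this, Set.range_comp, he.range_eq, Set.image_univ]

lemma mem_horn_of_fac {m : SimplexCategoryᵒᵖ} (a : (Λ[n+1, i] : SSet.{0}).obj m) {k : SimplexCategory}
    (e : m.unop ⟶ k) (ι : k ⟶ ⦋n+1⦌) [Epi e] (fac : e ≫ ι = hornHom a) :
    Set.range (SSet.stdSimplex.asOrderHom ((SSet.stdSimplex.objEquiv (n := ⦋n+1⦌) (m := op k)).symm ι)) ∪ {i}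
      ≠ Set.univ := by
  have key : Set.range (SSet.stdSimplex.asOrderHom ((SSet.stdSimplex.objEquiv (n := ⦋n+1⦌) (m := op k)).symm ι))
      = Set.range (SSet.stdSimplex.asOrderHom a.1) := by
    have h := range_comp_epi e ι
    rw [fac] at h
    exact h.symm
  rw [key]
  exact a.2

lemma image_len_le {m : SimplexCategoryᵒᵖ} (a : (Λ[n+1, i] : SSet.{0}).obj m) :
    (image (hornHom a)).len ≤ n := by
  have hinj : Function.Injective (image.ι (hornHom a)).toOrderHom :=
    SimplexCategory.mono_iff_injective.mp inferInstance
  have h2 : SSet.stdSimplex.asOrderHom a.1 = (hornHom a).toOrderHom := rfl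
  have hrange : Set.range (image.ι (hornHom a)).toOrderHom
      = Set.range (SSet.stdSimplex.asOrderHom a.1) := by
    have h := range_comp_epi (factorThruImage (hornHom a)) (image.ι (hornHom a))
    rw [image.fac] at h
    rw [h2]
    exact h.symm
  obtain ⟨j, hj⟩ := (Set.ne_univ_iff_exists_notMem _).mp a.2
  have hjr : j ∉ Set.range (image.ι (hornHom a)).toOrderHom := by
    rw [hrange]; exact fun h => hj (Or.inl h)
  have h1 : Set.ncard (Set.range (image.ι (hornHom a)).toOrderHom)
      = (image (hornHom a)).len + 1 := by
    rw [← Set.image_univ, Set.ncard_image_of_injective _ hinj, Set.ncard_univ,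
      Nat.card_eq_fintype_card, Fintype.card_fin]
  have hsub : Set.range (image.ι (hornHom a)).toOrderHom ⊆ Set.univ \ {j} := by
    intro x hx
    exact ⟨Set.mem_univ x, by simp only [Set.mem_singleton_iff]; rintro rfl; exact hjr hx⟩
  have h3 : Set.ncard ((Set.univ \ {j}) : Set (Fin (n + 2))) = n + 1 := by
    rw [Set.ncard_diff_singleton_of_mem (Set.mem_univ j), Set.ncard_univ,
      Nat.card_eq_fintype_card, Fintype.card_fin]
    omega
  have h4 := Set.ncard_le_ncard hsub (Set.toFinite _)
  omega

variable {X : SSet.{0}}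

/-- Components of the extension of a truncated morphism out of a small horn. -/
def hornExtendApp (hq : n ≤ q)
    (f' : (SimplicialObject.truncation q).obj (Λ[n+1, i] : SSet.{0}) ⟶ (SimplicialObject.truncation q).obj X)
    (m : SimplexCategoryᵒᵖ) (a : (Λ[n+1, i] : SSet.{0}).obj m) : X.obj m :=
  X.map (factorThruImage (hornHom a)).op
    (f'.app (op ⟨image (hornHom a), le_trans (image_len_le a) hq⟩)
      ⟨SSet.stdSimplex.objEquiv.symm (image.ι (hornHom a)),
        mem_horn_of_fac a _ _ (image.fac _)⟩)

lemma hornExtendApp_eq (hq : n ≤ q)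
    (f' : (SimplicialObject.truncation q).obj (Λ[n+1, i] : SSet.{0}) ⟶ (SimplicialObject.truncation q).obj X)
    (m : SimplexCategoryᵒᵖ) (a : (Λ[n+1, i] : SSet.{0}).obj m) {k : SimplexCategory} (hk : k.len ≤ q)
    (e : m.unop ⟶ k) (ι : k ⟶ ⦋n+1⦌) [Epi e] [Mono ι] (fac : e ≫ ι = hornHom a) :
    hornExtendApp hq f' m a =
      X.map e.op (f'.app (op ⟨k, hk⟩)
        ⟨SSet.stdSimplex.objEquiv.symm ι, mem_horn_of_fac a e ι fac⟩) := by
  obtain rfl := SimplexCategory.image_eq fac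
  obtain rfl := SimplexCategory.image_ι_eq fac
  obtain rfl := SimplexCategory.factorThruImage_eq fac
  rfl

lemma hornHom_map {m₁ m₂ : SimplexCategoryᵒᵖ} (g : m₁ ⟶ m₂) (a : (Λ[n+1, i] : SSet.{0}).obj m₁) :
    hornHom (((Λ[n+1, i] : SSet.{0})).map g a) = g.unop ≫ hornHom a := by
  show SSet.stdSimplex.objEquiv (Δ[n+1].map g a.1) = _
  rw [SSet.stdSimplex.map_apply, Equiv.apply_symm_apply]
  rfl

/-- The extension of a truncated morphism out of a small horn. -/
def hornExtend (hq : n ≤ q)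
    (f' : (SimplicialObject.truncation q).obj (Λ[n+1, i] : SSet.{0}) ⟶ (SimplicialObject.truncation q).obj X) :
    (Λ[n+1, i] : SSet.{0}) ⟶ X where
  app m := TypeCat.ofHom (hornExtendApp hq f' m)
  naturality m₁ m₂ g := by
    ext a
    show hornExtendApp hq f' m₂ (((Λ[n+1, i] : SSet.{0})).map g a) = X.map g (hornExtendApp hq f' m₁ a)
    set φ := hornHom a with hφ
    set e := factorThruImage φ with he
    set ι := image.ι φ with hι
    set e₂ := factorThruImage (g.unop ≫ e) with he₂
    set ι₂ := image.ι (g.unop ≫ e) with hι₂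
    have hk₁ : (image φ).len ≤ q := le_trans (image_len_le a) hq
    have hk₂ : (image (g.unop ≫ e)).len ≤ q :=
      le_trans (SimplexCategory.len_le_of_mono ι₂) hk₁
    have fac2 : e₂ ≫ (ι₂ ≫ ι) = hornHom (((Λ[n+1, i] : SSet.{0})).map g a) := by
      rw [hornHom_map, ← Category.assoc, image.fac, Category.assoc, image.fac]
    rw [hornExtendApp_eq hq f' m₂ (((Λ[n+1, i] : SSet.{0})).map g a) hk₂ e₂ (ι₂ ≫ ι) fac2,
      hornExtendApp_eq hq f' m₁ a hk₁ e ι (image.fac φ)]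
    erw [← FunctorToTypes.map_comp_apply]
    have hop : e.op ≫ g = (e₂ ≫ ι₂).op := by
      rw [image.fac]
      rfl
    erw [hop, op_comp, FunctorToTypes.map_comp_apply]
    -- naturality of f' along ι₂
    let h12 : (⟨image (g.unop ≫ e), hk₂⟩ : SimplexCategory.Truncated q) ⟶
        ⟨image φ, hk₁⟩ := ObjectProperty.homMk ι₂
    have hnat := NatTrans.naturality_apply f' (h12.op)
      ⟨SSet.stdSimplex.objEquiv.symm ι, mem_horn_of_fac a e ι (image.fac φ)⟩
    have hmap : ((SimplicialObject.truncation q).obj (Λ[n+1, i] : SSet.{0})).map h12.op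
        ⟨SSet.stdSimplex.objEquiv.symm ι, mem_horn_of_fac a e ι (image.fac φ)⟩
        = ⟨SSet.stdSimplex.objEquiv.symm (ι₂ ≫ ι),
            mem_horn_of_fac (((Λ[n+1, i] : SSet.{0})).map g a) e₂ (ι₂ ≫ ι) fac2⟩ := by
      apply Subtype.ext
      show Δ[n+1].map ι₂.op (SSet.stdSimplex.objEquiv.symm ι) = _
      rw [SSet.stdSimplex.map_apply, Equiv.apply_symm_apply]
      rfl
    exact congrArg (X.map e₂.op)
      ((congrArg (f'.app (op ⟨image (g.unop ≫ e), hk₂⟩)) hmap.symm).trans hnat)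

lemma truncation_hornExtend (hq : n ≤ q)
    (f' : (SimplicialObject.truncation q).obj (Λ[n+1, i] : SSet.{0}) ⟶ (SimplicialObject.truncation q).obj X) :
    (SimplicialObject.truncation q).map (hornExtend hq f') = f' := by
  apply NatTrans.ext
  funext x
  ext a
  set φ := hornHom a with hφ
  set e := factorThruImage φ with he
  set ι := image.ι φ with hι
  have hk₁ : (image φ).len ≤ q := le_trans (image_len_le a) hq
  show hornExtendApp hq f' (op (unop x).obj) a = f'.app x a
  rw [hornExtendApp_eq hq f' (op (unop x).obj) a hk₁ e ι (image.fac φ)]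
  let h12 : (unop x) ⟶ (⟨image φ, hk₁⟩ : SimplexCategory.Truncated q) := ObjectProperty.homMk e
  have hnat := NatTrans.naturality_apply f' (h12.op)
    ⟨SSet.stdSimplex.objEquiv.symm ι, mem_horn_of_fac a e ι (image.fac φ)⟩
  have hmap : ((SimplicialObject.truncation q).obj (Λ[n+1, i] : SSet.{0})).map h12.op
      ⟨SSet.stdSimplex.objEquiv.symm ι, mem_horn_of_fac a e ι (image.fac φ)⟩
      = a := by
    apply Subtype.ext
    show Δ[n+1].map e.op (SSet.stdSimplex.objEquiv.symm ι) = a.1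
    rw [SSet.stdSimplex.map_apply, Equiv.apply_symm_apply]
    show SSet.stdSimplex.objEquiv.symm (e ≫ ι) = a.1
    rw [image.fac]
    exact Equiv.symm_apply_apply _ a.1
  exact hnat.symm.trans (congrArg (f'.app x) hmap)

lemma isIso_truncation_hornInclusion (hqn : q < n) :
    IsIso ((SimplicialObject.truncation q).map ((SSet.horn (n+1) i).ι)) := by
  haveI : ∀ (x : (SimplexCategory.Truncated q)ᵒᵖ),
      IsIso (((SimplicialObject.truncation q).map ((SSet.horn (n+1) i).ι)).app x) := by
    intro x
    rw [CategoryTheory.isIso_iff_bijective]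
    constructor
    · intro a b hab
      exact Subtype.ext hab
    · intro α
      refine ⟨⟨α, ?_⟩, rfl⟩
      intro huniv
      have hle : (unop x).obj.len ≤ q := (unop x).property
      have h1 : (Set.range (SSet.stdSimplex.asOrderHom α) ∪ {i}).ncard ≤ (unop x).obj.len + 2 := by
        rw [Set.union_singleton]
        refine le_trans (Set.ncard_insert_le _ _) ?_
        rw [← Set.image_univ]
        have h2 := Set.ncard_image_le (s := (Set.univ : Set (Fin ((unop x).obj.len + 1))))
          (f := SSet.stdSimplex.asOrderHom α) Set.finite_univ
        rw [Set.ncard_univ, Nat.card_eq_fintype_card, Fintype.card_fin] at h2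
        omega
      rw [huniv, Set.ncard_univ, Nat.card_eq_fintype_card, Fintype.card_fin] at h1
      omega
  exact NatIso.isIso_of_isIso_app _

end CoskKanAux


/-- If `X` is a Kan complex, then for every `q ≥ 1` the `q`-coskeleton `cosk_q X`
is a Kan complex. -/
theorem cosk_isKanComplex (X : SSet.{0}) (hX : IsKanComplex X) (q : ℕ) (hq : 1 ≤ q) :
    IsKanComplex (coskObj q X) := by
  intro n i
  constructor
  intro f g sq
  by_cases hnq : n ≤ q
  · haveI := hX n i
    let f' := ((SimplicialObject.coskAdj q).homEquiv _ _).symm f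
    let u : (Λ[n+1, i] : SSet.{0}) ⟶ X := hornExtend hnq f'
    have sq2 : CommSq u ((SSet.horn (n+1) i).ι) (SemiCartesianMonoidalCategory.toUnit X)
        (SemiCartesianMonoidalCategory.toUnit _) := ⟨SemiCartesianMonoidalCategory.toUnit_unique _ _⟩
    refine ⟨⟨⟨sq2.lift ≫ coskUnit q X, ?_, SemiCartesianMonoidalCategory.toUnit_unique _ _⟩⟩⟩
    rw [← Category.assoc, sq2.fac_left]
    have hu : (SimplicialObject.truncation q).map u = f' := truncation_hornExtend hnq f'
    have h2 : (SimplicialObject.coskAdj q).homEquiv _ _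
        ((SimplicialObject.truncation q).map u) = u ≫ coskUnit q X := by
      rw [Adjunction.homEquiv_unit]
      exact ((SimplicialObject.coskAdj q).unit.naturality u).symm
    rw [hu] at h2
    rw [← h2]
    exact Equiv.apply_symm_apply _ f
  · push_neg at hnq
    haveI := isIso_truncation_hornInclusion (i := i) (n := n) hnq
    refine ⟨⟨⟨(SimplicialObject.coskAdj q).homEquiv _ _
      (inv ((SimplicialObject.truncation q).map ((SSet.horn (n+1) i).ι)) ≫
        ((SimplicialObject.coskAdj q).homEquiv _ _).symm f), ?_,
      SemiCartesianMonoidalCategory.toUnit_unique _ _⟩⟩⟩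
    refine ((SimplicialObject.coskAdj q).homEquiv_naturality_left _ _).symm.trans ?_
    rw [IsIso.hom_inv_id_assoc]
    exact Equiv.apply_symm_apply _ f

end PaperSSet
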